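/- For every d ≥ 1 and every vertex v of the d-dimensional hypercube Q^d, the configuration that places 3^d − 2d pebbles on v, one pebble on each of the d neighbors of v, and no pebbles elsewhere, is coverable. -/

import Mathlib

open Finset

/-- A pebbling step on graph `G`: remove two pebbles from a vertex `u`,
place one pebble on an adjacent vertex `v`. -/
def PebbleStep {V : Type*} (G : SimpleGraph V) (C C' : V → ℕ) : Prop :=
  ∃ u v : V, G.Adj u v ∧ 2 ≤ C u ∧ C' u = C u - 2 ∧ C' v = C v + 1 ∧
    ∀ x : V, x ≠ u → x ≠ v → C' x = C x

/-- A configuration is coverable if after some sequence of pebbling steps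
every vertex has at least one pebble. -/
def Coverable {V : Type*} (G : SimpleGraph V) (C : V → ℕ) : Prop :=
  ∃ C' : V → ℕ, Relation.ReflTransGen (PebbleStep G) C C' ∧ ∀ v : V, 1 ≤ C' v

/-- The `d`-dimensional hypercube: vertices are binary `d`-tuples, adjacent
exactly when they differ in one coordinate. -/
def cube (d : ℕ) : SimpleGraph (Fin d → Bool) where
  Adj x y := hammingDist x y = 1
  symm := ⟨fun x y h => by simpa [hammingDist_comm] using h⟩
  loopless := ⟨fun x h => by simp [hammingDist_self] at h⟩

instance (d : ℕ) : DecidableRel (cube d).Adj :=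
  fun x y => inferInstanceAs (Decidable (hammingDist x y = 1))

/-!
Pebbling is additive: if `C` reaches `C'` and `D` reaches `D'`, then `C + D` reaches `C' + D'`.
Along a walk of length `ℓ`, `2 ^ ℓ` pebbles at its start move one pebble to its end. In `Q^d`
there is a walk of length `hammingDist v u` from `v` to `u`, and `∑ u, 2 ^ hammingDist v u = 3 ^ d`,
of which the `d` neighbours of `v` account for `2d`. So the `3 ^ d - 2d` pebbles on `v` split
into one packet of `2 ^ hammingDist v u` pebbles for every non-neighbour `u` (including `v` itself,
with a packet of one pebble), each of which covers its `u`, while the neighbours already hold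
a pebble.
-/

open Function

abbrev PebbleReach {V : Type*} (G : SimpleGraph V) : (V → ℕ) → (V → ℕ) → Prop :=
  Relation.ReflTransGen (PebbleStep G)

section Pebbling

variable {V : Type*} {G : SimpleGraph V}

theorem PebbleStep.add_right {C C' : V → ℕ} (h : PebbleStep G C C') (E : V → ℕ) :
    PebbleStep G (C + E) (C' + E) := by
  obtain ⟨u, w, hadj, h2, hu, hw, hrest⟩ := h
  refine ⟨u, w, hadj, le_add_right h2, ?_, ?_, fun x hxu hxw => ?_⟩
  · simp only [Pi.add_apply, hu]
    omega
  · simp only [Pi.add_apply, hw]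
    omega
  · simp only [Pi.add_apply, hrest x hxu hxw]

theorem PebbleReach.add {C C' D D' : V → ℕ} (hC : PebbleReach G C C') (hD : PebbleReach G D D') :
    PebbleReach G (C + D) (C' + D') :=
  (hC.lift (· + D) fun _ _ h => h.add_right D).trans <|
    hD.lift (C' + ·) fun _ _ h => by simpa only [add_comm C'] using h.add_right C'

theorem PebbleReach.sum {ι : Type*} (s : Finset ι) {C C' : ι → V → ℕ}
    (h : ∀ i ∈ s, PebbleReach G (C i) (C' i)) :
    PebbleReach G (∑ i ∈ s, C i) (∑ i ∈ s, C' i) := by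
  classical
  induction s using Finset.induction_on with
  | empty => simpa using Relation.ReflTransGen.refl
  | insert a s ha ih =>
    simp only [Finset.sum_insert ha]
    exact (h a (Finset.mem_insert_self a s)).add (ih fun i hi => h i (Finset.mem_insert_of_mem hi))

variable [DecidableEq V]

theorem pebbleStep_single {u w : V} (h : G.Adj u w) :
    PebbleStep G (Pi.single u 2) (Pi.single w 1) :=
  ⟨u, w, h, by simp, by simp [h.ne], by simp [h.ne'], fun x hxu hxw => by simp [hxu, hxw]⟩

theorem pebbleReach_single_two_mul {u w : V} (h : G.Adj u w) (n : ℕ) :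
    PebbleReach G (Pi.single u (2 * n)) (Pi.single w n) := by
  induction n with
  | zero => simpa using Relation.ReflTransGen.refl
  | succ n ih =>
    rw [mul_add_one, Pi.single_add, Pi.single_add]
    exact ih.add (.single (pebbleStep_single h))

theorem pebbleReach_single_of_walk {u w : V} (p : G.Walk u w) :
    PebbleReach G (Pi.single u (2 ^ p.length)) (Pi.single w 1) := by
  induction p with
  | nil => exact .refl
  | cons h p ih =>
    rw [SimpleGraph.Walk.length_cons, pow_succ']
    exact (pebbleReach_single_two_mul h _).trans ih

end Pebbling

section Hamming

variable {ι : Type*} [Fintype ι] [DecidableEq ι]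

def hammingDiffEquiv (v : ι → Bool) : (ι → Bool) ≃ Finset ι where
  toFun u := {i | v i ≠ u i}
  invFun s i := xor (v i) (decide (i ∈ s))
  left_inv u := by
    funext i
    cases hv : v i <;> cases hu : u i <;> simp [hv, hu]
  right_inv s := by
    ext i
    cases hv : v i <;> simp [hv]

theorem card_hammingDiffEquiv (v u : ι → Bool) : #(hammingDiffEquiv v u) = hammingDist v u := rfl

theorem sum_pow_hammingDist (v : ι → Bool) (k : ℕ) :
    ∑ u, k ^ hammingDist v u = (k + 1) ^ Fintype.card ι := by
  calc ∑ u, k ^ hammingDist v u = ∑ s : Finset ι, k ^ #s :=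
        (hammingDiffEquiv v).sum_comp (fun s => k ^ #s)
    _ = (k + 1) ^ Fintype.card ι := by simpa using Fintype.sum_pow_mul_eq_add_pow ι k 1

theorem card_hammingDist_eq_one (v : ι → Bool) :
    #{u | hammingDist v u = 1} = Fintype.card ι := by
  rw [← Nat.choose_one_right (Fintype.card ι), ← Finset.card_univ, ← Finset.card_powersetCard]
  exact Finset.card_equiv (hammingDiffEquiv v) fun u => by simp [← card_hammingDiffEquiv v u]

theorem hammingDist_update_of_ne {β : ι → Type*} [∀ i, DecidableEq (β i)] {v : ∀ i, β i} {i : ι}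
    {b : β i} (hb : v i ≠ b) : hammingDist v (update v i b) = 1 := by
  rw [hammingDist, Finset.card_eq_one]
  refine ⟨i, Finset.ext fun j => ?_⟩
  by_cases hj : j = i
  · subst hj
    simp [hb]
  · simp [hj]

theorem hammingDist_update_add_one {β : ι → Type*} [∀ i, DecidableEq (β i)] {v u : ∀ i, β i}
    {i : ι} (hi : v i ≠ u i) : hammingDist (update v i (u i)) u + 1 = hammingDist v u := by
  rw [hammingDist, hammingDist, ← Finset.card_insert_of_notMem (a := i) (by simp)]
  congr 1
  ext j
  by_cases hj : j = i
  · subst hj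
    simp [hi]
  · simp [hj]

end Hamming

section Cube

variable {d : ℕ}

theorem cube_adj_iff {x y : Fin d → Bool} : (cube d).Adj x y ↔ hammingDist x y = 1 := Iff.rfl

theorem cube_exists_walk (v u : Fin d → Bool) :
    ∃ p : (cube d).Walk v u, p.length = hammingDist v u := by
  induction hn : hammingDist v u generalizing v with
  | zero =>
    obtain rfl := hammingDist_eq_zero.1 hn
    exact ⟨.nil, rfl⟩
  | succ n ih =>
    obtain ⟨i, hi⟩ : ∃ i, v i ≠ u i := by
      by_contra! h
      simp [funext h] at hn
    obtain ⟨p, hp⟩ := ih (update v i (u i)) (by have := hammingDist_update_add_one hi; omega)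
    exact ⟨.cons (cube_adj_iff.2 (hammingDist_update_of_ne hi)) p, by simp [hp]⟩

theorem cube_degree (v : Fin d → Bool) : (cube d).degree v = d := by
  rw [← SimpleGraph.card_neighborFinset_eq_degree, SimpleGraph.neighborFinset_eq_filter]
  exact (card_hammingDist_eq_one v).trans (Fintype.card_fin d)

theorem sum_compl_neighborFinset_two_pow_hammingDist (v : Fin d → Bool) :
    ∑ u ∈ ((cube d).neighborFinset v)ᶜ, 2 ^ hammingDist v u = 3 ^ d - 2 * d := by
  have hN : ∑ u ∈ (cube d).neighborFinset v, 2 ^ hammingDist v u = 2 * d := by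
    rw [Finset.sum_congr rfl fun u hu => by
      rw [cube_adj_iff.1 ((SimpleGraph.mem_neighborFinset _ _ _).1 hu)]]
    simp [SimpleGraph.card_neighborFinset_eq_degree, cube_degree, mul_comm]
  have htotal := Finset.sum_add_sum_compl ((cube d).neighborFinset v) (2 ^ hammingDist v ·)
  rw [sum_pow_hammingDist, hN, Fintype.card_fin, two_add_one_eq_three] at htotal
  omega

theorem cube_config_eq_sum_single (v : Fin d → Bool) :
    (fun x => if x = v then 3 ^ d - 2 * d else if (cube d).Adj v x then 1 else 0) =
      ∑ u ∈ ((cube d).neighborFinset v)ᶜ, Pi.single v (2 ^ hammingDist v u) +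
        ∑ u ∈ (cube d).neighborFinset v, Pi.single u 1 := by
  funext x
  simp only [Pi.add_apply, Finset.sum_apply, Pi.single_apply, Finset.sum_ite_eq,
    SimpleGraph.mem_neighborFinset]
  by_cases hx : x = v
  · subst hx
    simp [sum_compl_neighborFinset_two_pow_hammingDist]
  · simp [hx]

end Cube

theorem base_case_coverable_general (d : ℕ) (v : Fin d → Bool) :
    Coverable (cube d)
      (fun x => if x = v then 3 ^ d - 2 * d else if (cube d).Adj v x then 1 else 0) := by
  refine ⟨1, ?_, fun _ => le_rfl⟩
  rw [cube_config_eq_sum_single, ← Finset.univ_sum_single (1 : (Fin d → Bool) → ℕ),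
    ← Finset.sum_compl_add_sum ((cube d).neighborFinset v)]
  refine PebbleReach.add (PebbleReach.sum _ fun u _ => ?_) (PebbleReach.sum _ fun u _ => .refl)
  obtain ⟨p, hp⟩ := cube_exists_walk v u
  simpa [hp] using pebbleReach_single_of_walk p

/-- For every `d ≥ 1` and every vertex `v` of `Q^d`, the configuration placing
`3^d − 2d` pebbles on `v`, one pebble on each of the `d` neighbors of `v`, and
none elsewhere, is coverable. -/
theorem base_case_coverable (d : ℕ) (hd : 1 ≤ d) (v : Fin d → Bool) :
    Coverable (cube d)
      (fun x => if x = v then 3 ^ d - 2 * d else if (cube d).Adj v x then 1 else 0) :=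
  base_case_coverable_general d v
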